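/- arXiv:2102.00518 — 2 statements merged into one kernel-verified Lean document; each statement's English description precedes it below -/
import Mathlib

section
/- Define iterated antiderivatives of the right Radau polynomial $R^-_{k+1}=\phi_{k+1}-\phi_k$ by $R^{-,(0)}_{k+1}=R^-_{k+1}$ and $R^{-,(-l-1)}_{k+1}(y)=\int_{-1}^y R^{-,(-l)}_{k+1}(z)\,dz$. Then for $0\le l\le k$, $R^{-,(-l)}_{k+1}$ is a linear combination $\sum_{i=k-l}^{k+l+1} c^l_i \phi_i$ of Legendre polynomials of degrees between $k-l$ and $k+l+1$, and the lowest coefficient is $c^l_{k-l} = (-1)^{l+1}\frac{(2k-2l+1)!!}{(2k+1)!!}$. -/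
/-! Rodrigues' formula and
`D² (X² - 1)ⁿ⁺² = 2(n+2)(2n+3) (X² - 1)ⁿ⁺¹ + 4(n+1)(n+2) (X² - 1)ⁿ` give
`φ'ₙ₊₂ - φ'ₙ = (2n+3) φₙ₊₁`; together with `φₙ(-1) = (-1)ⁿ` this yields
`∫_{-1}^y φᵢ = (φᵢ₊₁ - φᵢ₋₁)/(2i+1)` for `i ≥ 1`. So integrating a Legendre expansion without
`φ₀`-term widens its index range by one on each side. At the bottom end only the old lowest
coefficient, divided by `-(2(k-l)+1)`, contributes, because the coefficient below it is zero;
these factors telescope to the double-factorial ratio. -/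

open Polynomial

/-- The Legendre polynomial of degree `n` on `[-1,1]`, normalized so that it
takes the value `1` at `1` (Rodrigues' formula). -/
noncomputable def legendre (n : ℕ) : Polynomial ℝ :=
  Polynomial.C (1 / (2^n * (n.factorial : ℝ))) *
    (Polynomial.derivative)^[n] ((Polynomial.X^2 - 1)^n)

/-- Iterated antiderivatives of the right Radau polynomial `R⁻_{k+1} = φ_{k+1} - φ_k`:
`radauIter k 0 = R⁻_{k+1}` and `radauIter k (l+1) y = ∫_{-1}^y radauIter k l`. -/
noncomputable def radauIter (k : ℕ) : ℕ → ℝ → ℝ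
  | 0 => fun y => (legendre (k+1) - legendre k).eval y
  | (l+1) => fun y => ∫ z in (-1 : ℝ)..y, radauIter k l z

section

variable {R : Type*} [CommRing R]

theorem derivative_X_sq_sub_one_pow_succ (m : ℕ) :
    derivative ((X ^ 2 - 1 : R[X]) ^ (m + 1)) = C (2 * (m + 1) : R) * X * (X ^ 2 - 1) ^ m := by
  rw [derivative_pow, derivative_sub, derivative_X_sq, derivative_one, Nat.add_sub_cancel]
  simp only [map_mul, map_add, map_natCast, map_ofNat, map_one, Nat.cast_add, Nat.cast_one]
  ring

theorem derivative_derivative_X_sq_sub_one_pow (n : ℕ) :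
    derivative (derivative ((X ^ 2 - 1 : R[X]) ^ (n + 2))) =
      C (2 * (n + 2) * (2 * n + 3) : R) * (X ^ 2 - 1) ^ (n + 1) +
        C (4 * (n + 1) * (n + 2) : R) * (X ^ 2 - 1) ^ n := by
  rw [derivative_X_sq_sub_one_pow_succ, derivative_mul, derivative_X_sq_sub_one_pow_succ,
    derivative_mul, derivative_X, derivative_C]
  simp only [map_mul, map_add, map_natCast, map_ofNat, map_one, Nat.cast_add, Nat.cast_one]
  ring

theorem iterate_derivative_X_sq_sub_one_pow (n : ℕ) :
    derivative^[n + 3] ((X ^ 2 - 1 : R[X]) ^ (n + 2)) =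
      C (2 * (n + 2) * (2 * n + 3) : R) * derivative^[n + 1] ((X ^ 2 - 1) ^ (n + 1)) +
        C (4 * (n + 1) * (n + 2) : R) * derivative^[n + 1] ((X ^ 2 - 1) ^ n) := by
  change derivative^[n + 1] (derivative (derivative _)) = _
  rw [derivative_derivative_X_sq_sub_one_pow, iterate_map_add, iterate_derivative_C_mul,
    iterate_derivative_C_mul]

theorem eval_iterate_derivative_X_sub_C_pow_mul (n : ℕ) (c : R) (q : R[X]) :
    (derivative^[n] ((X - C c) ^ n * q)).eval c = n.factorial * q.eval c := by
  rw [iterate_derivative_mul, eval_finsetSum, Finset.sum_eq_single_of_mem _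
    (Finset.mem_range.mpr n.succ_pos)]
  · rw [n.choose_zero_right, one_smul, eval_mul, n.sub_zero, iterate_derivative_X_sub_pow_self,
      eval_natCast, Function.iterate_zero_apply]
  · intro b hb hb0
    rw [iterate_derivative_X_sub_pow, eval_smul, eval_mul, eval_smul, eval_pow,
      Nat.sub_sub_self (Finset.mem_range_succ_iff.mp hb), eval_sub, eval_X, eval_C, sub_self,
      zero_pow hb0, smul_zero, zero_mul, smul_zero]

end

theorem derivative_legendre_add_two_sub (n : ℕ) :
    derivative (legendre (n + 2)) - derivative (legendre n) =
      C (2 * n + 3 : ℝ) * legendre (n + 1) := by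
  have hD : ∀ m, derivative (legendre m) =
      C (1 / (2 ^ m * (m.factorial : ℝ))) * derivative^[m + 1] ((X ^ 2 - 1) ^ m) := fun m => by
    rw [legendre, derivative_C_mul, Function.iterate_succ_apply']
  have hfac : ((n + 2).factorial : ℝ) = (n + 2) * ((n + 1) * n.factorial) := by
    push_cast [Nat.factorial_succ]; ring
  have hn : (n.factorial : ℝ) ≠ 0 := by positivity
  have hhigh : 1 / (2 ^ (n + 2) * ((n + 2).factorial : ℝ)) * (2 * (n + 2) * (2 * n + 3)) =
      (2 * n + 3) * (1 / (2 ^ (n + 1) * ((n + 1).factorial : ℝ))) := by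
    rw [hfac, Nat.factorial_succ]; push_cast; field_simp; ring
  have hlow : 1 / (2 ^ (n + 2) * ((n + 2).factorial : ℝ)) * (4 * (n + 1) * (n + 2)) =
      1 / (2 ^ n * (n.factorial : ℝ)) := by
    rw [hfac]; field_simp; ring
  rw [hD, hD, iterate_derivative_X_sq_sub_one_pow, legendre, mul_add, ← mul_assoc, ← mul_assoc,
    ← C_mul, ← C_mul, hhigh, hlow, C_mul]
  ring

theorem legendre_eval_neg_one (n : ℕ) : (legendre n).eval (-1) = (-1) ^ n := by
  have h : (X ^ 2 - 1 : ℝ[X]) ^ n = (X - C (-1)) ^ n * (X - 1) ^ n := by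
    rw [← mul_pow, map_neg, map_one]; ring
  rw [legendre, eval_mul, eval_C, h, eval_iterate_derivative_X_sub_C_pow_mul]
  simp only [eval_pow, eval_sub, eval_X, eval_one]
  have : (n.factorial : ℝ) ≠ 0 := by positivity
  rw [show (-1 - 1 : ℝ) = -1 * 2 by norm_num, mul_pow]
  field_simp

theorem integral_legendre_succ (n : ℕ) (y : ℝ) :
    ∫ z in (-1 : ℝ)..y, (legendre (n + 1)).eval z =
      ((legendre (n + 2)).eval y - (legendre n).eval y) / (2 * n + 3) := by
  set P := legendre (n + 2) - legendre n
  have hP : ∀ x, HasDerivAt P.eval ((2 * n + 3) * (legendre (n + 1)).eval x) x := fun x => by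
    simpa [P, derivative_sub, derivative_legendre_add_two_sub] using P.hasDerivAt x
  have hP1 : P.eval (-1) = 0 := by
    simp [P, legendre_eval_neg_one, pow_succ]
  rw [eq_div_iff (by positivity), mul_comm, ← intervalIntegral.integral_const_mul,
    intervalIntegral.integral_eq_sub_of_hasDerivAt (fun x _ => hP x)
      (((Polynomial.continuous _).const_mul _).intervalIntegrable _ _), hP1, sub_zero, eval_sub]

noncomputable def legendreIntegralCoeff (c : ℕ → ℝ) (j : ℕ) : ℝ :=
  (if j = 0 then 0 else c (j - 1) / (2 * j - 1)) - c (j + 1) / (2 * j + 3)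

theorem integral_sum_legendre {c : ℕ → ℝ} {N : ℕ} (h0 : c 0 = 0) (hN : ∀ i, N ≤ i → c i = 0)
    (y : ℝ) :
    ∫ z in (-1 : ℝ)..y, ∑ i ∈ Finset.range N, c i * (legendre i).eval z =
      ∑ j ∈ Finset.range (N + 1), legendreIntegralCoeff c j * (legendre j).eval y := by
  set φ : ℕ → ℝ := fun i => (legendre i).eval y
  set u : ℕ → ℝ := fun j => if j = 0 then 0 else c (j - 1) / (2 * j - 1)
  set e : ℕ → ℝ := fun j => c (j + 1) / (2 * j + 3)
  have hlhs : ∫ z in (-1 : ℝ)..y, ∑ i ∈ Finset.range N, c i * (legendre i).eval z =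
      ∑ i ∈ Finset.range N, e i * (φ (i + 2) - φ i) := by
    rw [intervalIntegral.integral_finsetSum fun i _ =>
      ((Polynomial.continuous _).const_mul _).intervalIntegrable _ _]
    simp only [intervalIntegral.integral_const_mul]
    rw [← add_zero (Finset.sum _ _), ← zero_mul (∫ z in (-1 : ℝ)..y, (legendre N).eval z),
      ← hN N le_rfl, ← Finset.sum_range_succ, Finset.sum_range_succ', h0, zero_mul, add_zero]
    refine Finset.sum_congr rfl fun i _ => ?_
    rw [integral_legendre_succ]
    simp only [e, φ]
    ring
  have hu : ∑ j ∈ Finset.range (N + 1), u j * φ j = ∑ i ∈ Finset.range N, e i * φ (i + 2) := by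
    have hlast :
        ∑ j ∈ Finset.range (N + 2), u j * φ j = ∑ j ∈ Finset.range (N + 1), u j * φ j := by
      rw [Finset.sum_range_succ]
      simp [u, hN N le_rfl]
    rw [← hlast, Finset.sum_range_succ', Finset.sum_range_succ']
    simp only [u, h0, zero_div, ite_self, zero_mul, add_zero]
    refine Finset.sum_congr rfl fun i _ => ?_
    simp only [e, if_neg (Nat.succ_ne_zero _), Nat.add_sub_cancel]
    push_cast
    ring
  have he : ∑ j ∈ Finset.range (N + 1), e j * φ j = ∑ j ∈ Finset.range N, e j * φ j := by
    rw [Finset.sum_range_succ]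
    simp [e, hN (N + 1) N.le_succ]
  rw [hlhs]
  simp only [legendreIntegralCoeff, sub_mul, Finset.sum_sub_distrib, mul_sub]
  change _ = ∑ j ∈ Finset.range (N + 1), u j * φ j - ∑ j ∈ Finset.range (N + 1), e j * φ j
  rw [hu, he]

theorem legendreIntegralCoeff_eq_zero_of_lt {c : ℕ → ℝ} {m : ℕ} (hc : ∀ i ≤ m, c i = 0)
    {j : ℕ} (hj : j < m) : legendreIntegralCoeff c j = 0 := by
  simp only [legendreIntegralCoeff, hc (j + 1) (by omega), zero_div, sub_zero]
  split_ifs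
  · rfl
  · rw [hc (j - 1) (by omega), zero_div]

theorem legendreIntegralCoeff_eq_zero_of_le {c : ℕ → ℝ} {N : ℕ} (hc : ∀ i, N ≤ i → c i = 0)
    {j : ℕ} (hj : N + 1 ≤ j) : legendreIntegralCoeff c j = 0 := by
  rw [legendreIntegralCoeff, if_neg (by omega), hc (j - 1) (by omega), hc (j + 1) (by omega)]
  simp

theorem legendreIntegralCoeff_of_forall_lt_eq_zero {c : ℕ → ℝ} {m : ℕ} (hc : ∀ i < m, c i = 0) :
    legendreIntegralCoeff c m = -(c (m + 1) / (2 * m + 3)) := by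
  rw [legendreIntegralCoeff]
  split_ifs
  · ring
  · rw [hc (m - 1) (by omega)]
    ring

noncomputable def radauCoeff (k : ℕ) : ℕ → ℕ → ℝ
  | 0 => Pi.single (k + 1) 1 - Pi.single k 1
  | l + 1 => legendreIntegralCoeff (radauCoeff k l)

theorem radauCoeff_eq_zero_of_lt (k l : ℕ) {i : ℕ} (hi : i < k - l) : radauCoeff k l i = 0 := by
  induction l generalizing i with
  | zero =>
    simp only [radauCoeff, Pi.sub_apply, Pi.single_apply]
    rw [if_neg (by omega), if_neg (by omega), sub_zero]
  | succ l ih =>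
    exact legendreIntegralCoeff_eq_zero_of_lt (m := k - (l + 1)) (fun j hj => ih (by omega)) hi

theorem radauCoeff_eq_zero_of_le (k l : ℕ) {i : ℕ} (hi : k + l + 2 ≤ i) :
    radauCoeff k l i = 0 := by
  induction l generalizing i with
  | zero =>
    simp only [radauCoeff, Pi.sub_apply, Pi.single_apply]
    rw [if_neg (by omega), if_neg (by omega), sub_zero]
  | succ l ih =>
    exact legendreIntegralCoeff_eq_zero_of_le (fun j hj => ih hj) (by omega)

theorem radauIter_eq_sum {k l : ℕ} (hl : l ≤ k) (y : ℝ) :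
    radauIter k l y = ∑ i ∈ Finset.range (k + l + 2), radauCoeff k l i * (legendre i).eval y := by
  induction l generalizing y with
  | zero =>
    simp [radauIter, radauCoeff, Pi.single_apply, Finset.sum_ite_eq', Finset.sum_sub_distrib,
      sub_mul]
  | succ l ih =>
    change ∫ z in (-1 : ℝ)..y, radauIter k l z = _
    rw [intervalIntegral.integral_congr fun z _ => ih (by omega) z,
      integral_sum_legendre (radauCoeff_eq_zero_of_lt k l (by omega))
        fun i hi => radauCoeff_eq_zero_of_le k l hi]
    rfl

theorem radauCoeff_apply_sub {k l : ℕ} (hl : l ≤ k) :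
    radauCoeff k l (k - l) = (-1) ^ (l + 1) *
      (Nat.doubleFactorial (2 * (k - l) + 1) : ℝ) / (Nat.doubleFactorial (2 * k + 1) : ℝ) := by
  induction l with
  | zero =>
    have : ((2 * k + 1).doubleFactorial : ℝ) ≠ 0 := by positivity
    simp [radauCoeff, this]
  | succ l ih =>
    obtain ⟨m, hm⟩ : ∃ m, k - l = m + 1 := ⟨k - l - 1, by omega⟩
    have hdf : ((2 * (m + 1) + 1).doubleFactorial : ℝ) =
        (2 * m + 3) * (2 * m + 1).doubleFactorial := by
      rw [show 2 * (m + 1) + 1 = 2 * m + 1 + 2 by ring, Nat.doubleFactorial_add_two]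
      push_cast
      ring
    rw [show k - (l + 1) = m by omega, radauCoeff,
      legendreIntegralCoeff_of_forall_lt_eq_zero fun i hi =>
        radauCoeff_eq_zero_of_lt k l (by omega),
      ← hm, ih (by omega), hm, hdf]
    field_simp
    ring

theorem stmt4 (k l : ℕ) (hl : l ≤ k) :
    ∃ c : ℕ → ℝ,
      (∀ y : ℝ, radauIter k l y =
        ∑ i ∈ Finset.Icc (k - l) (k + l + 1), c i * (legendre i).eval y) ∧
      c (k - l) = (-1)^(l+1) *
        (Nat.doubleFactorial (2*(k-l)+1) : ℝ) / (Nat.doubleFactorial (2*k+1) : ℝ) := by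
  refine ⟨radauCoeff k l, fun y => ?_, radauCoeff_apply_sub hl⟩
  rw [radauIter_eq_sum hl]
  refine (Finset.sum_subset (fun i hi => ?_) fun i hrange hi => ?_).symm
  · simp only [Finset.mem_Icc] at hi
    exact Finset.mem_range.2 (by omega)
  · simp only [Finset.mem_Icc, Finset.mem_range, not_and_or, not_le] at hi hrange
    rw [radauCoeff_eq_zero_of_lt k l (by omega), zero_mul]
end

section
/- With $R^{-,(-l)}_{k+1}$ the iterated antiderivatives of the right Radau polynomial as above, one has $R^{-,(-l)}_{k+1}(1)=0$ for $1\le l\le k$, while $R^{-,(-k-1)}_{k+1}(1) = (-1)^{k+1}\frac{2}{(2k+1)!!}$. -/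
open Polynomial

open scoped Nat

/-! The `l`-th antiderivative of `φ_n` vanishing at `-1` is the Rodrigues expression with `n - l`
derivatives instead of `n`: every derivative of order `< n` of `(X² - 1)ⁿ` still has the factor
`X² - 1`, so it vanishes at `±1`. Hence the iterated antiderivatives of `φ_{k+1} - φ_k` vanish at
`1` up to order `k`, and at order `k + 1` only `-(2ᵏ k!)⁻¹ ∫₋₁¹ (x² - 1)ᵏ dx` survives; this
integral is computed by the recursion `(2k+3) I_{k+1} = -(2k+2) I_k`, obtained by integrating the
derivative of `x (x² - 1)^{k+1}`. -/

theorem Polynomial.integral_eval_derivative (p : ℝ[X]) (a b : ℝ) :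
    ∫ x in a..b, (derivative p).eval x = p.eval b - p.eval a :=
  intervalIntegral.integral_eq_sub_of_hasDerivAt (fun x _ => p.hasDerivAt x)
    ((derivative p).continuous.intervalIntegrable a b)

theorem eval_iterate_derivative_X_sq_sub_one_pow_eq_zero {n j : ℕ} (hj : j < n) {x : ℝ}
    (hx : x ^ 2 = 1) : (derivative^[j] (((X : ℝ[X]) ^ 2 - 1) ^ n)).eval x = 0 := by
  obtain ⟨q, hq⟩ := pow_sub_dvd_iterate_derivative_pow ((X : ℝ[X]) ^ 2 - 1) n j
  simp [hq, hx, Nat.sub_ne_zero_of_lt hj]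

theorem integral_sq_sub_one_pow (k : ℕ) :
    ∫ x in (-1 : ℝ)..1, (x ^ 2 - 1) ^ k =
      (-1) ^ k * 2 ^ (k + 1) * (k ! : ℝ) / ((2 * k + 1)‼ : ℝ) := by
  induction k with
  | zero => norm_num
  | succ k ih =>
    have hderiv : ∀ x : ℝ, HasDerivAt (fun x => x * (x ^ 2 - 1) ^ (k + 1))
        ((2 * k + 3) * (x ^ 2 - 1) ^ (k + 1) + (2 * k + 2) * (x ^ 2 - 1) ^ k) x := by
      intro x
      refine ((hasDerivAt_id' x).fun_mul
        (((hasDerivAt_pow 2 x).sub_const 1).fun_pow (k + 1))).congr_deriv ?_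
      simp only [Nat.add_sub_cancel]
      push_cast
      ring
    have hrec := intervalIntegral.integral_eq_sub_of_hasDerivAt (a := -1) (b := 1)
      (fun x _ => hderiv x) (by apply Continuous.intervalIntegrable; fun_prop)
    rw [intervalIntegral.integral_add (by apply Continuous.intervalIntegrable; fun_prop)
        (by apply Continuous.intervalIntegrable; fun_prop),
      intervalIntegral.integral_const_mul, intervalIntegral.integral_const_mul, ih] at hrec
    rw [show 2 * (k + 1) + 1 = 2 * k + 1 + 2 by ring, Nat.doubleFactorial_add_two,
      Nat.factorial_succ]
    have hdf : ((2 * k + 1)‼ : ℝ) ≠ 0 := by positivity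
    field_simp
    push_cast
    norm_num at hrec
    field_simp at hrec
    linear_combination hrec

/-- For `l ≤ n`, the `l`-th antiderivative of `legendre n` vanishing at `-1`. -/
noncomputable def legendreAntideriv (n l : ℕ) : ℝ[X] :=
  C (1 / (2 ^ n * (n.factorial : ℝ))) * derivative^[n - l] (((X : ℝ[X]) ^ 2 - 1) ^ n)

theorem legendreAntideriv_zero (n : ℕ) : legendreAntideriv n 0 = legendre n := rfl

theorem eval_legendreAntideriv_self (n : ℕ) (y : ℝ) :
    (legendreAntideriv n n).eval y = 1 / (2 ^ n * n !) * (y ^ 2 - 1) ^ n := by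
  simp [legendreAntideriv]

theorem derivative_legendreAntideriv_succ {n l : ℕ} (hl : l < n) :
    derivative (legendreAntideriv n (l + 1)) = legendreAntideriv n l := by
  rw [legendreAntideriv, legendreAntideriv, derivative_C_mul,
    ← Function.iterate_succ_apply' derivative, show (n - (l + 1)).succ = n - l by omega]

theorem eval_legendreAntideriv_eq_zero {n l : ℕ} (hl : 0 < l) (hln : l ≤ n) {x : ℝ}
    (hx : x ^ 2 = 1) : (legendreAntideriv n l).eval x = 0 := by
  rw [legendreAntideriv, eval_mul,
    eval_iterate_derivative_X_sq_sub_one_pow_eq_zero (by omega) hx, mul_zero]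

theorem integral_eval_legendreAntideriv {n l : ℕ} (hl : l < n) (y : ℝ) :
    ∫ z in (-1 : ℝ)..y, (legendreAntideriv n l).eval z =
      (legendreAntideriv n (l + 1)).eval y := by
  rw [← derivative_legendreAntideriv_succ hl, Polynomial.integral_eval_derivative,
    eval_legendreAntideriv_eq_zero (x := -1) l.succ_pos hl (by norm_num), sub_zero]

theorem radauIter_eq_eval {k l : ℕ} (hl : l ≤ k) (y : ℝ) :
    radauIter k l y = (legendreAntideriv (k + 1) l - legendreAntideriv k l).eval y := by
  induction l generalizing y with
  | zero => simp only [radauIter, legendreAntideriv_zero]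
  | succ l ih =>
    simp only [radauIter, ih (by omega), eval_sub]
    rw [intervalIntegral.integral_sub (by apply Continuous.intervalIntegrable; fun_prop)
        (by apply Continuous.intervalIntegrable; fun_prop),
      integral_eval_legendreAntideriv (by omega), integral_eval_legendreAntideriv (by omega)]

theorem stmt5 (k : ℕ) :
    (∀ l : ℕ, 1 ≤ l → l ≤ k → radauIter k l 1 = 0) ∧
    radauIter k (k+1) 1 = (-1)^(k+1) * 2 / (Nat.doubleFactorial (2*k+1) : ℝ) := by
  refine ⟨fun l hl hlk => ?_, ?_⟩
  · rw [radauIter_eq_eval hlk, eval_sub,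
      eval_legendreAntideriv_eq_zero hl (by omega) (by norm_num),
      eval_legendreAntideriv_eq_zero hl hlk (by norm_num), sub_zero]
  · simp only [radauIter, radauIter_eq_eval le_rfl, eval_sub]
    rw [intervalIntegral.integral_sub (by apply Continuous.intervalIntegrable; fun_prop)
        (by apply Continuous.intervalIntegrable; fun_prop),
      integral_eval_legendreAntideriv k.lt_succ_self,
      eval_legendreAntideriv_eq_zero (x := 1) k.succ_pos le_rfl (by norm_num)]
    simp only [eval_legendreAntideriv_self, intervalIntegral.integral_const_mul,
      integral_sq_sub_one_pow]
    have hdf : ((2 * k + 1)‼ : ℝ) ≠ 0 := by positivity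
    field_simp
    ring
end
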